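/- arXiv:1910.13402 — 3 statements merged into one kernel-verified Lean document; each statement's English description precedes it below -/
import Mathlib

section
/- Let b ≥ 4 and θ ∈ ℝ. Then |Σ_{0 ≤ m < b, m ≠ a_0} e(mθ)| ≤ b − 3 + 2exp(−‖θ‖²) ≤ (b−1)·exp(−‖θ‖²/b) for any a_0 ∈ {0,…,b−1}. -/
/-!
Of the `b - 1` unit vectors `e (m θ)`, two are consecutive, `m = n, n + 1`, because a single
excluded digit cannot separate all such pairs once `b ≥ 4`. Their sum is `e (n θ) (1 + e θ)`, of
modulus `2 |cos (π θ)| = 2 cos (π ‖θ‖) ≤ 2 (1 - 2 ‖θ‖²) ≤ 2 exp (-‖θ‖²)`; the other `b - 3` terms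
are bounded trivially. The second inequality follows from `exp (-u) ≤ 1 - u / 2` on `[0, 1]` and
`1 - u / b ≤ exp (-u / b)`.
-/

open Real

/-- `e(t) = exp(2πit)`. -/
noncomputable def e (t : ℝ) : ℂ := Complex.exp (2 * Real.pi * Complex.I * t)

/-- Distance from `x` to the nearest integer. -/
noncomputable def nint (x : ℝ) : ℝ := |x - round x|

lemma norm_e (t : ℝ) : ‖e t‖ = 1 := by
  simpa [e, mul_comm, mul_left_comm, mul_assoc] using Complex.norm_exp_ofReal_mul_I (2 * π * t)

lemma e_add (s t : ℝ) : e (s + t) = e s * e t := by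
  simp only [e, ← Complex.exp_add]; push_cast; ring_nf

lemma one_add_e (θ : ℝ) : 1 + e θ = e (θ / 2) * (2 * cos (π * θ)) := by
  rw [Complex.ofReal_cos, Complex.ofReal_mul, Complex.two_cos]
  simp only [e, mul_add, ← Complex.exp_add]
  push_cast; ring_nf; simp [add_comm]

lemma norm_one_add_e (θ : ℝ) : ‖1 + e θ‖ = 2 * |cos (π * θ)| := by
  rw [one_add_e, norm_mul, norm_e, one_mul, Complex.norm_mul, Complex.norm_ofNat,
    Complex.norm_real, Real.norm_eq_abs]

lemma abs_cos_pi_mul {x : ℝ} (hx : |x| ≤ 1 / 2) : |cos (π * x)| = cos (π * |x|) := by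
  have hcos : cos (π * x) = cos (π * |x|) := by
    rw [← cos_abs (π * x), abs_mul, abs_of_pos pi_pos]
  rw [hcos, abs_of_nonneg]
  apply cos_nonneg_of_mem_Icc
  constructor <;> nlinarith [abs_nonneg x, pi_pos]

lemma abs_cos_pi_mul_eq_cos_pi_mul_nint (θ : ℝ) : |cos (π * θ)| = cos (π * nint θ) := by
  have hθ : π * θ = π * (θ - round θ) + (round θ : ℤ) * π := by ring
  rw [hθ, cos_add_int_mul_pi, abs_mul, abs_neg_one_zpow, one_mul, nint,
    abs_cos_pi_mul (abs_sub_round θ)]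

lemma cos_pi_mul_le_exp_neg_sq {x : ℝ} (hx : |x| ≤ 1) : cos (π * x) ≤ exp (-x ^ 2) := by
  have hquad : cos (π * x) ≤ 1 - 2 * x ^ 2 := by
    have := cos_le_one_sub_mul_cos_sq (x := π * x) (by
      rw [abs_mul, abs_of_pos pi_pos]; nlinarith [pi_pos])
    convert this using 2; field_simp
  nlinarith [add_one_le_exp (-x ^ 2), sq_nonneg x]

lemma nint_nonneg (x : ℝ) : 0 ≤ nint x := abs_nonneg _

lemma nint_le_half (x : ℝ) : nint x ≤ 1 / 2 := abs_sub_round x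

lemma norm_one_add_e_le (θ : ℝ) : ‖1 + e θ‖ ≤ 2 * exp (-nint θ ^ 2) := by
  have hn : |nint θ| ≤ 1 := by
    rw [abs_of_nonneg (nint_nonneg θ)]; linarith [nint_le_half θ]
  rw [norm_one_add_e, abs_cos_pi_mul_eq_cos_pi_mul_nint]
  linarith [cos_pi_mul_le_exp_neg_sq hn]

lemma norm_e_add_e_add_le (x θ : ℝ) : ‖e x + e (x + θ)‖ ≤ 2 * exp (-nint θ ^ 2) := by
  rw [e_add, ← mul_one_add, norm_mul, norm_e, one_mul]
  exact norm_one_add_e_le θ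

lemma norm_sum_e_le_of_mem_of_succ_mem {S : Finset ℕ} {n : ℕ} (hn : n ∈ S) (hn' : n + 1 ∈ S)
    (θ : ℝ) : ‖∑ m ∈ S, e (m * θ)‖ ≤ (S.card : ℝ) - 2 + 2 * exp (-nint θ ^ 2) := by
  have hsucc : n + 1 ∈ S.erase n := Finset.mem_erase.2 ⟨by omega, hn'⟩
  rw [← Finset.add_sum_erase S _ hn, ← Finset.add_sum_erase _ _ hsucc, ← add_assoc]
  have hpair : ‖e (n * θ) + e ((n + 1 : ℕ) * θ)‖ ≤ 2 * exp (-nint θ ^ 2) := by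
    simpa [add_mul] using norm_e_add_e_add_le (n * θ) θ
  have hrest : ‖∑ m ∈ (S.erase n).erase (n + 1), e (m * θ)‖ ≤ (S.card : ℝ) - 2 := by
    refine (norm_sum_le _ _).trans ?_
    simp only [norm_e, Finset.sum_const, nsmul_eq_mul, mul_one]
    have h1 := Finset.card_erase_add_one hn
    have h2 := Finset.card_erase_add_one hsucc
    rify at h1 h2
    linarith
  calc _ ≤ ‖e (n * θ) + e ((n + 1 : ℕ) * θ)‖ + ‖∑ m ∈ (S.erase n).erase (n + 1), e (m * θ)‖ :=
        norm_add_le _ _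
    _ ≤ _ := by linarith

lemma exp_neg_le_one_sub_half {u : ℝ} (h0 : 0 ≤ u) (h1 : u ≤ 1) : exp (-u) ≤ 1 - u / 2 := by
  have hpos : 0 < 1 + u := by linarith
  calc exp (-u) = (exp u)⁻¹ := exp_neg u
    _ ≤ (1 + u)⁻¹ := inv_anti₀ hpos (by linarith [add_one_le_exp u])
    _ ≤ 1 - u / 2 := by rw [inv_le_iff_one_le_mul₀ hpos]; nlinarith

lemma sub_three_add_two_mul_exp_neg_le {b u : ℝ} (hb : 1 ≤ b) (h0 : 0 ≤ u) (h1 : u ≤ 1) :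
    b - 3 + 2 * exp (-u) ≤ (b - 1) * exp (-u / b) := by
  have hb0 : 0 < b := by linarith
  calc b - 3 + 2 * exp (-u) ≤ (b - 1) * (1 - u / b) := by
        have : (b - 1) * (1 - u / b) = b - 1 - u + u / b := by field_simp; ring
        nlinarith [exp_neg_le_one_sub_half h0 h1, div_nonneg h0 hb0.le]
    _ ≤ (b - 1) * exp (-u / b) := by
        gcongr
        rw [neg_div]; exact one_sub_le_exp_neg _

/-- For `b ≥ 4` and any digit `a₀ < b`,
`|∑_{0 ≤ m < b, m ≠ a₀} e(mθ)| ≤ b − 3 + 2exp(−‖θ‖²) ≤ (b−1)·exp(−‖θ‖²/b)`. -/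
theorem restricted_digit_sum_bound (b a₀ : ℕ) (hb : 4 ≤ b) (ha₀ : a₀ < b) (θ : ℝ) :
    ‖∑ m ∈ (Finset.range b).filter (fun m => m ≠ a₀), e (m * θ)‖ ≤
        (b : ℝ) - 3 + 2 * Real.exp (-(nint θ ^ 2)) ∧
      (b : ℝ) - 3 + 2 * Real.exp (-(nint θ ^ 2)) ≤
        ((b : ℝ) - 1) * Real.exp (-(nint θ ^ 2) / b) := by
  rw [Finset.filter_ne']
  set S := (Finset.range b).erase a₀
  have hcard : (S.card : ℝ) = b - 1 := by
    rw [Finset.card_erase_of_mem (Finset.mem_range.2 ha₀), Finset.card_range,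
      Nat.cast_sub (by omega), Nat.cast_one]
  obtain ⟨n, hn, hn'⟩ : ∃ n, n ∈ S ∧ n + 1 ∈ S := by
    simp only [S, Finset.mem_erase, Finset.mem_range]
    exact if h : a₀ ≤ 1 then ⟨2, by omega⟩ else ⟨0, by omega⟩
  have hb' : (1 : ℝ) ≤ b := by exact_mod_cast (by omega : 1 ≤ b)
  have hsq : nint θ ^ 2 ≤ 1 := by nlinarith [nint_nonneg θ, nint_le_half θ]
  refine ⟨?_, sub_three_add_two_mul_exp_neg_le hb' (sq_nonneg _) hsq⟩
  convert norm_sum_e_le_of_mem_of_succ_mem hn hn' θ using 2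
  rw [hcard]; ring
end

section
/- Let b ≥ 2 and θ, α ∈ ℝ. Then ‖b^i θ + α‖ + ‖b^{i+1} θ + α‖ ≥ ‖(b−1)α‖ / b for every integer i ≥ 0. -/
lemma nint_le (x : ℝ) (z : ℤ) : nint x ≤ |x - z| := round_le x z

lemma nint_sub_le (x y : ℝ) : nint (x - y) ≤ nint x + nint y := by
  calc nint (x - y) ≤ |x - y - ((round x - round y : ℤ) : ℝ)| := nint_le _ _
    _ ≤ _ := by
        push_cast
        have : x - y - ((round x : ℝ) - round y) = (x - round x) - (y - round y) := by ring
        rw [this]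
        exact abs_sub (x - round x) (y - round y)

lemma nint_nat_mul_le (n : ℕ) (x : ℝ) : nint (n * x) ≤ n * nint x := by
  calc nint (n * x) ≤ |(n : ℝ) * x - (((n : ℤ) * round x : ℤ) : ℝ)| := nint_le _ _
    _ = n * nint x := by
        push_cast
        rw [← mul_sub, abs_mul, abs_of_nonneg (by positivity : (0:ℝ) ≤ (n:ℝ))]
        rfl

/-- For `b ≥ 2` and reals `θ, α`,
`‖b^i θ + α‖ + ‖b^{i+1} θ + α‖ ≥ ‖(b−1)α‖ / b` for every integer `i ≥ 0`. -/
theorem consecutive_nint_lower_bound (b : ℕ) (hb : 2 ≤ b) (θ α : ℝ) (i : ℕ) :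
    nint ((b - 1 : ℝ) * α) / b ≤
      nint ((b : ℝ) ^ i * θ + α) + nint ((b : ℝ) ^ (i + 1) * θ + α) := by
  have hb0 : (0:ℝ) < b := by positivity
  set t1 := (b : ℝ) ^ i * θ + α
  set t2 := (b : ℝ) ^ (i + 1) * θ + α
  have key : (b : ℝ) * t1 - t2 = (b - 1 : ℝ) * α := by
    simp only [t1, t2, pow_succ]; ring
  have h1 : nint ((b - 1 : ℝ) * α) ≤ nint ((b:ℝ) * t1) + nint t2 := by
    rw [← key]; exact nint_sub_le _ _
  have h2 : nint ((b:ℝ) * t1) ≤ b * nint t1 := nint_nat_mul_le b t1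
  have h3 : nint ((b - 1 : ℝ) * α) ≤ b * (nint t1 + nint t2) := by
    have h0 : 0 ≤ nint t2 := abs_nonneg _
    have hb1 : (1:ℝ) ≤ b := by exact_mod_cast Nat.one_le_of_lt hb
    nlinarith [h0, h1, h2, hb1]
  rw [div_le_iff₀ hb0] at *
  linarith
end

section
/- Let F : ℝ → ℂ be continuously differentiable and δ > 0. Then for every t, |F(t)| ≤ (1/(2δ))∫_{t−δ}^{t+δ} |F(u)| du + ∫_{t−δ}^{t+δ} |F'(u)| du. -/
/-!
For every `u` in the window `[t - δ, t + δ]`, `‖F t‖ ≤ ‖F u‖ + ∫ ‖F'‖` over the whole window,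
since `F u - F t` is the integral of `F'` between `t` and `u`. Averaging over `u` gives the bound.
-/

open Set MeasureTheory

theorem norm_sub_le_integral_norm_deriv_of_mem_Icc {E : Type*} [NormedAddCommGroup E]
    [NormedSpace ℝ E] {f : ℝ → E} {a b t u : ℝ}
    (hf : DifferentiableOn ℝ f (Icc a b))
    (hf' : IntervalIntegrable (fun x ↦ ‖deriv f x‖) volume a b)
    (ht : t ∈ Icc a b) (hu : u ∈ Icc a b) :
    ‖f u - f t‖ ≤ ∫ x in a..b, ‖deriv f x‖ := by
  wlog htu : t ≤ u generalizing t u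
  · rw [norm_sub_rev]
    exact this hu ht (le_of_not_ge htu)
  have hsub : Icc t u ⊆ Icc a b := Icc_subset_Icc ht.1 hu.2
  calc ‖f u - f t‖ ≤ ∫ x in t..u, ‖deriv f x‖ :=
        norm_sub_le_integral_of_norm_deriv_le_of_le htu (hf.continuousOn.mono hsub)
          (hf.mono (Ioo_subset_Icc_self.trans hsub)) (.of_forall fun _ _ ↦ le_rfl)
          (hf'.mono_set (by rwa [uIcc_of_le htu, uIcc_of_le (ht.1.trans (htu.trans hu.2))]))
    _ ≤ ∫ x in a..b, ‖deriv f x‖ :=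
        intervalIntegral.integral_mono_interval ht.1 htu hu.2
          (.of_forall fun _ ↦ norm_nonneg _) hf'

theorem le_interval_average_of_forall_le {g : ℝ → ℝ} {a b c : ℝ} (hab : a < b)
    (hg : IntervalIntegrable g volume a b) (hcg : ∀ u ∈ Icc a b, c ≤ g u) :
    c ≤ ⨍ x in a..b, g x := by
  rw [interval_average_eq, smul_eq_mul, le_inv_mul_iff₀ (sub_pos.2 hab)]
  calc (b - a) * c = ∫ _ in a..b, c := by simp
    _ ≤ ∫ x in a..b, g x :=
        intervalIntegral.integral_mono_on hab.le intervalIntegrable_const hg hcg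

/-- Pointwise-to-integral bound underlying Gallagher's form of the large sieve:
if `F : ℝ → ℂ` is continuously differentiable and `δ > 0`, then for every `t`,
`|F(t)| ≤ (1/(2δ)) ∫_{t−δ}^{t+δ} |F(u)| du + ∫_{t−δ}^{t+δ} |F'(u)| du`. -/
theorem gallagher_pointwise_bound (F : ℝ → ℂ) (hF : ContDiff ℝ 1 F)
    (δ : ℝ) (hδ : 0 < δ) (t : ℝ) :
    ‖F t‖ ≤ (1 / (2 * δ)) * ∫ u in (t - δ)..(t + δ), ‖F u‖ +
      ∫ u in (t - δ)..(t + δ), ‖deriv F u‖ := by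
  set C := ∫ u in (t - δ)..(t + δ), ‖deriv F u‖
  -- As parsed, the second integral sits inside the first integrand, as a constant.
  have hmean : (1 / (2 * δ)) * ∫ u in (t - δ)..(t + δ), ‖F u‖ + C =
      ⨍ u in (t - δ)..(t + δ), ‖F u‖ + C := by
    rw [interval_average_eq, smul_eq_mul, one_div, show t + δ - (t - δ) = 2 * δ by ring]
  rw [hmean]
  refine le_interval_average_of_forall_le (by linarith)
    ((hF.continuous.norm.add continuous_const).intervalIntegrable _ _) fun u hu ↦ ?_
  have hosc : ‖F u - F t‖ ≤ C :=
    norm_sub_le_integral_norm_deriv_of_mem_Icc (hF.differentiable one_ne_zero).differentiableOn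
      ((hF.continuous_deriv le_rfl).norm.intervalIntegrable _ _) ⟨by linarith, by linarith⟩ hu
  linarith [norm_sub_norm_le (F t) (F u), norm_sub_rev (F t) (F u)]
end
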